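/- arXiv:2203.13908 — 2 statements merged into one kernel-verified Lean document; each statement's English description precedes it below -/
import Mathlib

section
/- Suppose A ∈ B(V^N, V^m) has the weighted rNSP over V of order (k,w) with constants 0 < ρ < 1 and γ > 0. Fix x ∈ V^N, b ∈ V^m, and set e = Ax − b. Consider the weighted SR-LASSO objective G(z) = λ‖z‖_{1,w;V} + ‖Az − b‖_{2;V} with parameter 0 < λ ≤ ((1+ρ)²/((3+ρ)γ)) k^{−1/2}. Then for any x̃ ∈ V^N: ‖x̃ − x‖_{2;V} ≤ (C₁'/√k)(2σ_k(x)_{1,w;V} + (G(x̃) − G(x))/λ) + (C₁'/(√k λ) + C₂')‖e‖_{2;V}, where C₁' = (1+ρ)²/(1−ρ) and C₂' = (3+ρ)γ/(1−ρ). -/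
/-- The `ℓ²`-norm of a `V`-valued vector: `‖x‖_{2;V} = (∑ i ‖x i‖²)^{1/2}`. -/
noncomputable def l2norm {ι : Type*} [Fintype ι] {V : Type*} [NormedAddCommGroup V]
    (x : ι → V) : ℝ := Real.sqrt (∑ i, ‖x i‖ ^ 2)

/-- The weighted `ℓ¹_w`-norm of a `V`-valued vector: `‖x‖_{1,w;V} = ∑ i w i ‖x i‖`. -/
noncomputable def l1wnorm {ι : Type*} [Fintype ι] {V : Type*} [NormedAddCommGroup V]
    (w : ι → ℝ) (x : ι → V) : ℝ := ∑ i, w i * ‖x i‖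

/-- Weighted best `(k,w)`-term approximation error in the `ℓ¹_w`-norm:
`σ_k(x)_{1,w;V} = inf { ‖x − x_S‖_{1,w;V} : |S|_w ≤ k }`. -/
noncomputable def sigmaK {ι : Type*} [Fintype ι] [DecidableEq ι] {V : Type*} [NormedAddCommGroup V]
    (k : ℝ) (w : ι → ℝ) (x : ι → V) : ℝ :=
  sInf {r : ℝ | ∃ S : Finset ι, (∑ i ∈ S, w i ^ 2) ≤ k ∧
    r = l1wnorm w fun i => if i ∈ S then 0 else x i}

/-- The weighted robust null space property over `V` of order `(k,w)` with
constants `ρ` and `γ`. -/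
def wRNSP {N m : ℕ} {V : Type*} [NormedAddCommGroup V] [InnerProductSpace ℂ V]
    (A : (Fin N → V) →L[ℂ] (Fin m → V)) (k : ℝ) (w : Fin N → ℝ) (ρ γ : ℝ) : Prop :=
  ∀ (x : Fin N → V) (S : Finset (Fin N)), (∑ i ∈ S, w i ^ 2) ≤ k →
    l2norm (fun i => if i ∈ S then x i else 0) ≤
      ρ * l1wnorm w (fun i => if i ∈ S then 0 else x i) / Real.sqrt k +
        γ * l2norm (A x)

/-- The Hilbert-valued weighted SR-LASSO objective
`G(z) = λ‖z‖_{1,w;V} + ‖Az − b‖_{2;V}`. -/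
noncomputable def Gobj {N m : ℕ} {V : Type*} [NormedAddCommGroup V]
    [InnerProductSpace ℂ V]
    (A : (Fin N → V) →L[ℂ] (Fin m → V)) (w : Fin N → ℝ) (lam : ℝ)
    (z : Fin N → V) (b : Fin m → V) : ℝ :=
  lam * l1wnorm w z + l2norm (A z - b)

/-!
Fix a set `S` of weighted size at most `k` realising `σ_k(x)`: the infimum runs over finitely
many sets. The rNSP and Cauchy–Schwarz on `S` give the cone estimate
`(1 - ρ)‖z - x‖₁ ≤ (1 + ρ)(‖z‖₁ - ‖x‖₁ + 2σ_k(x)) + 2γ√k‖A(z - x)‖`. Thresholding `v` at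
`w_i ‖v‖₁ / k` gives a set of weighted size at most `k` off which `‖v‖₂ ≤ ‖v‖₁ / √k`, whence
`√k‖v‖₂ ≤ (1 + ρ)‖v‖₁ + γ√k‖Av‖`. Chaining the two for `v = x̃ - x`, and writing
`‖x̃‖₁ - ‖x‖₁ = (G(x̃) - G(x) - ‖Ax̃ - b‖ + ‖e‖) / λ` and `‖A(x̃ - x)‖ ≤ ‖Ax̃ - b‖ + ‖e‖`, the
residual `‖Ax̃ - b‖` ends up with coefficient `C₂' - C₁' / (√k λ) ≤ 0`, which is the constraint
on `λ`.
-/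

section Norms

variable {ι V : Type*} [Fintype ι] [NormedAddCommGroup V]

lemma l2norm_nonneg (x : ι → V) : 0 ≤ l2norm x := Real.sqrt_nonneg _

lemma l2norm_eq_norm_toLp (x : ι → V) : l2norm x = ‖WithLp.toLp 2 x‖ := by
  rw [PiLp.norm_eq_of_L2]; rfl

lemma l2norm_add_le (x y : ι → V) : l2norm (x + y) ≤ l2norm x + l2norm y := by
  simpa only [l2norm_eq_norm_toLp, WithLp.toLp_add] using
    norm_add_le (WithLp.toLp 2 x) (WithLp.toLp 2 y)

lemma l2norm_sub_le (x y : ι → V) : l2norm (x - y) ≤ l2norm x + l2norm y := by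
  simpa only [l2norm_eq_norm_toLp, WithLp.toLp_sub] using
    norm_sub_le (WithLp.toLp 2 x) (WithLp.toLp 2 y)

variable {w : ι → ℝ}

lemma l1wnorm_nonneg (hw : ∀ i, 0 ≤ w i) (x : ι → V) : 0 ≤ l1wnorm w x :=
  Finset.sum_nonneg fun i _ => mul_nonneg (hw i) (norm_nonneg _)

lemma l1wnorm_le_add_of_norm_le (hw : ∀ i, 0 ≤ w i) {x y z : ι → V}
    (hxyz : ∀ i, ‖x i‖ ≤ ‖y i‖ + ‖z i‖) : l1wnorm w x ≤ l1wnorm w y + l1wnorm w z := by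
  simp only [l1wnorm, ← Finset.sum_add_distrib, ← mul_add]
  exact Finset.sum_le_sum fun i _ => mul_le_mul_of_nonneg_left (hxyz i) (hw i)

lemma mul_sum_sq_le_l1wnorm (hw : ∀ i, 0 ≤ w i) {x : ι → V} {τ : ℝ} {S : Finset ι}
    (hS : ∀ i ∈ S, τ * w i ≤ ‖x i‖) : τ * ∑ i ∈ S, w i ^ 2 ≤ l1wnorm w x := by
  rw [Finset.mul_sum]
  refine (Finset.sum_le_sum fun i hi => ?_).trans
    (Finset.sum_le_sum_of_subset_of_nonneg (Finset.subset_univ S)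
      fun i _ _ => mul_nonneg (hw i) (norm_nonneg (x i)))
  nlinarith [hw i, hS i hi]

variable [DecidableEq ι]

lemma l1wnorm_restrict (x : ι → V) (S : Finset ι) :
    l1wnorm w (fun i => if i ∈ S then x i else 0) = ∑ i ∈ S, w i * ‖x i‖ := by
  simp [l1wnorm, apply_ite, Finset.sum_ite_mem]

lemma l2norm_restrict (x : ι → V) (S : Finset ι) :
    l2norm (fun i => if i ∈ S then x i else 0) = √(∑ i ∈ S, ‖x i‖ ^ 2) := by
  simp [l2norm, apply_ite, Finset.sum_ite_mem]

lemma l1wnorm_eq_restrict_add_compl (x : ι → V) (S : Finset ι) :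
    l1wnorm w x = l1wnorm w (fun i => if i ∈ S then x i else 0)
      + l1wnorm w (fun i => if i ∈ S then 0 else x i) := by
  simp only [l1wnorm, ← Finset.sum_add_distrib]
  exact Finset.sum_congr rfl fun i _ => by split_ifs <;> simp

lemma l1wnorm_compl_le (hw : ∀ i, 0 ≤ w i) (x : ι → V) (S : Finset ι) :
    l1wnorm w (fun i => if i ∈ S then 0 else x i) ≤ l1wnorm w x := by
  rw [l1wnorm_eq_restrict_add_compl x S]
  exact le_add_of_nonneg_left (l1wnorm_nonneg hw _)

lemma l2norm_le_restrict_add_compl (x : ι → V) (S : Finset ι) :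
    l2norm x ≤ l2norm (fun i => if i ∈ S then x i else 0)
      + l2norm (fun i => if i ∈ S then 0 else x i) := by
  convert l2norm_add_le (fun i => if i ∈ S then x i else 0) (fun i => if i ∈ S then 0 else x i)
  ext i; by_cases hi : i ∈ S <;> simp [hi]

lemma l1wnorm_restrict_le_sqrt_mul_l2norm {k : ℝ} (x : ι → V) {S : Finset ι}
    (hS : ∑ i ∈ S, w i ^ 2 ≤ k) :
    l1wnorm w (fun i => if i ∈ S then x i else 0) ≤
      √k * l2norm (fun i => if i ∈ S then x i else 0) := by
  rw [l1wnorm_restrict, l2norm_restrict]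
  exact (Real.sum_mul_le_sqrt_mul_sqrt S w (‖x ·‖)).trans
    (mul_le_mul_of_nonneg_right (Real.sqrt_le_sqrt hS) (Real.sqrt_nonneg _))

lemma l2norm_compl_sq_le (hw : ∀ i, 0 ≤ w i) {x : ι → V} {τ : ℝ} (hτ : 0 ≤ τ) {S : Finset ι}
    (hS : ∀ i ∉ S, ‖x i‖ ≤ τ * w i) :
    l2norm (fun i => if i ∈ S then 0 else x i) ^ 2 ≤ τ * l1wnorm w x := by
  rw [l2norm, Real.sq_sqrt (Finset.sum_nonneg fun i _ => sq_nonneg _), l1wnorm, Finset.mul_sum]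
  refine Finset.sum_le_sum fun i _ => ?_
  by_cases hi : i ∈ S
  · simpa [hi] using mul_nonneg hτ (mul_nonneg (hw i) (norm_nonneg (x i)))
  · simpa [hi, sq, ← mul_assoc] using mul_le_mul_of_nonneg_right (hS i hi) (norm_nonneg (x i))

lemma exists_sum_sq_le_sqrt_mul_l2norm_compl_le (hw : ∀ i, 0 ≤ w i) {k : ℝ} (hk : 0 < k)
    (x : ι → V) : ∃ S : Finset ι, ∑ i ∈ S, w i ^ 2 ≤ k ∧
      √k * l2norm (fun i => if i ∈ S then 0 else x i) ≤ l1wnorm w x := by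
  set t := l1wnorm w x
  have ht : 0 ≤ t := l1wnorm_nonneg hw x
  -- threshold at `τ = ‖x‖_{1,w} / k`; when `x = 0` any `τ > 0` will do
  obtain ⟨τ, hτ, htτ, hτt⟩ : ∃ τ : ℝ, 0 < τ ∧ t ≤ τ * k ∧ τ * k * t ≤ t ^ 2 := by
    rcases ht.eq_or_lt with h0 | hpos
    · exact ⟨1, one_pos, by simp [← h0, hk.le], by simp [← h0]⟩
    · exact ⟨t / k, by positivity, by field_simp; rfl, by field_simp; rfl⟩
  set S := Finset.univ.filter fun i => τ * w i < ‖x i‖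
  have hhead : τ * ∑ i ∈ S, w i ^ 2 ≤ t :=
    mul_sum_sq_le_l1wnorm hw fun i hi => (Finset.mem_filter.mp hi).2.le
  have htail : l2norm (fun i => if i ∈ S then 0 else x i) ^ 2 ≤ τ * t :=
    l2norm_compl_sq_le hw hτ.le fun i hi => by simpa [S] using hi
  refine ⟨S, by nlinarith, ?_⟩
  rw [← Real.sqrt_sq ht, ← Real.sqrt_sq (l2norm_nonneg _), ← Real.sqrt_mul hk.le]
  exact Real.sqrt_le_sqrt (by nlinarith)

lemma exists_sigmaK_eq (w : ι → ℝ) {k : ℝ} (hk : 0 ≤ k) (x : ι → V) :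
    ∃ S : Finset ι, ∑ i ∈ S, w i ^ 2 ≤ k ∧
      sigmaK k w x = l1wnorm w (fun i => if i ∈ S then 0 else x i) := by
  set errors := {r : ℝ | ∃ S : Finset ι, (∑ i ∈ S, w i ^ 2) ≤ k ∧
    r = l1wnorm w fun i => if i ∈ S then 0 else x i}
  have hne : errors.Nonempty := ⟨_, ∅, by simpa using hk, rfl⟩
  have hfin : errors.Finite :=
    (Set.finite_range fun S : Finset ι => l1wnorm w fun i => if i ∈ S then 0 else x i).subset
      fun r ⟨S, _, hr⟩ => ⟨S, hr.symm⟩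
  exact hne.csInf_mem hfin

end Norms

namespace wRNSP

variable {V : Type*} [NormedAddCommGroup V] [InnerProductSpace ℂ V] {N m : ℕ}
  {A : (Fin N → V) →L[ℂ] (Fin m → V)} {k : ℝ} {w : Fin N → ℝ} {ρ γ : ℝ}

lemma sqrt_mul_l2norm_restrict_le (h : wRNSP A k w ρ γ) (hk : 0 < k) (v : Fin N → V)
    {S : Finset (Fin N)} (hS : ∑ i ∈ S, w i ^ 2 ≤ k) :
    √k * l2norm (fun i => if i ∈ S then v i else 0) ≤
      ρ * l1wnorm w (fun i => if i ∈ S then 0 else v i) + γ * √k * l2norm (A v) := by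
  have hsk : 0 < √k := Real.sqrt_pos.mpr hk
  calc √k * l2norm (fun i => if i ∈ S then v i else 0)
      ≤ √k * (ρ * l1wnorm w (fun i => if i ∈ S then 0 else v i) / √k + γ * l2norm (A v)) :=
        mul_le_mul_of_nonneg_left (h v S hS) hsk.le
    _ = ρ * l1wnorm w (fun i => if i ∈ S then 0 else v i) + γ * √k * l2norm (A v) := by
        field_simp

lemma l1wnorm_restrict_le (h : wRNSP A k w ρ γ) (hk : 0 < k) (v : Fin N → V)
    {S : Finset (Fin N)} (hS : ∑ i ∈ S, w i ^ 2 ≤ k) :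
    l1wnorm w (fun i => if i ∈ S then v i else 0) ≤
      ρ * l1wnorm w (fun i => if i ∈ S then 0 else v i) + γ * √k * l2norm (A v) :=
  (l1wnorm_restrict_le_sqrt_mul_l2norm v hS).trans (h.sqrt_mul_l2norm_restrict_le hk v hS)

lemma l1wnorm_sub_le (h : wRNSP A k w ρ γ) (hk : 0 < k) (hw : ∀ i, 0 ≤ w i) (hρ0 : 0 ≤ ρ)
    (hρ1 : ρ ≤ 1) (z x : Fin N → V) {S : Finset (Fin N)} (hS : ∑ i ∈ S, w i ^ 2 ≤ k) :
    (1 - ρ) * l1wnorm w (z - x) ≤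
      (1 + ρ) * (l1wnorm w z - l1wnorm w x + 2 * l1wnorm w (fun i => if i ∈ S then 0 else x i))
        + 2 * γ * √k * l2norm (A (z - x)) := by
  have hv := h.l1wnorm_restrict_le hk (z - x) hS
  have hx_restrict : l1wnorm w (fun i => if i ∈ S then x i else 0) ≤
      l1wnorm w (fun i => if i ∈ S then z i else 0) +
        l1wnorm w (fun i => if i ∈ S then (z - x) i else 0) :=
    l1wnorm_le_add_of_norm_le hw fun i => by
      by_cases hi : i ∈ S
      · simpa [hi] using norm_le_norm_add_norm_sub (z i) (x i)
      · simp [hi]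
  have hv_compl : l1wnorm w (fun i => if i ∈ S then 0 else (z - x) i) ≤
      l1wnorm w (fun i => if i ∈ S then 0 else z i) +
        l1wnorm w (fun i => if i ∈ S then 0 else x i) :=
    l1wnorm_le_add_of_norm_le hw fun i => by
      by_cases hi : i ∈ S
      · simp [hi]
      · simpa [hi] using norm_sub_le (z i) (x i)
  have hv_compl' : (1 - ρ) * l1wnorm w (fun i => if i ∈ S then 0 else (z - x) i) ≤
      l1wnorm w z - l1wnorm w x + 2 * l1wnorm w (fun i => if i ∈ S then 0 else x i)
        + γ * √k * l2norm (A (z - x)) := by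
    linarith [l1wnorm_eq_restrict_add_compl (w := w) z S,
      l1wnorm_eq_restrict_add_compl (w := w) x S]
  rw [l1wnorm_eq_restrict_add_compl (w := w) (z - x) S]
  nlinarith [mul_le_mul_of_nonneg_left hv (sub_nonneg.mpr hρ1),
    mul_le_mul_of_nonneg_left hv_compl' (by linarith : (0 : ℝ) ≤ 1 + ρ)]

lemma sqrt_mul_l2norm_le (h : wRNSP A k w ρ γ) (hk : 0 < k) (hw : ∀ i, 0 ≤ w i) (hρ0 : 0 ≤ ρ)
    (v : Fin N → V) :
    √k * l2norm v ≤ (1 + ρ) * l1wnorm w v + γ * √k * l2norm (A v) := by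
  have hsk : 0 < √k := Real.sqrt_pos.mpr hk
  obtain ⟨S, hS, hcompl⟩ := exists_sum_sq_le_sqrt_mul_l2norm_compl_le hw hk v
  have := h.sqrt_mul_l2norm_restrict_le hk v hS
  have := mul_le_mul_of_nonneg_left (l2norm_le_restrict_add_compl v S) hsk.le
  have := mul_le_mul_of_nonneg_left (l1wnorm_compl_le hw v S) hρ0
  linarith

lemma l2norm_sub_le_sigmaK (h : wRNSP A k w ρ γ) (hk : 0 < k) (hw : ∀ i, 0 ≤ w i)
    (hρ0 : 0 ≤ ρ) (hρ1 : ρ < 1) (z x : Fin N → V) :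
    l2norm (z - x) ≤ (1 + ρ) ^ 2 / (1 - ρ) / √k *
        (l1wnorm w z - l1wnorm w x + 2 * sigmaK k w x) +
      (3 + ρ) * γ / (1 - ρ) * l2norm (A (z - x)) := by
  have hsk : 0 < √k := Real.sqrt_pos.mpr hk
  have h1ρ : 0 < 1 - ρ := sub_pos.mpr hρ1
  obtain ⟨S, hS, hσ⟩ := exists_sigmaK_eq w hk.le x
  have hl1 := h.l1wnorm_sub_le hk hw hρ0 hρ1.le z x hS
  rw [← hσ] at hl1
  have hl2 := h.sqrt_mul_l2norm_le hk hw hρ0 (z - x)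
  have hcombined : √k * (1 - ρ) * l2norm (z - x) ≤
      (1 + ρ) ^ 2 * (l1wnorm w z - l1wnorm w x + 2 * sigmaK k w x) +
        (3 + ρ) * γ * √k * l2norm (A (z - x)) := by
    nlinarith [mul_le_mul_of_nonneg_left hl2 h1ρ.le,
      mul_le_mul_of_nonneg_left hl1 (by linarith : (0 : ℝ) ≤ 1 + ρ)]
  calc l2norm (z - x) = √k * (1 - ρ) * l2norm (z - x) / (√k * (1 - ρ)) := by field_simp
    _ ≤ ((1 + ρ) ^ 2 * (l1wnorm w z - l1wnorm w x + 2 * sigmaK k w x) +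
        (3 + ρ) * γ * √k * l2norm (A (z - x))) / (√k * (1 - ρ)) := by gcongr
    _ = _ := by field_simp

end wRNSP

theorem wRNSP_inexact_minimizer_bound_general {V : Type*} [NormedAddCommGroup V]
    [InnerProductSpace ℂ V] {N m : ℕ}
    (A : (Fin N → V) →L[ℂ] (Fin m → V)) (k : ℝ) (hk : 0 < k)
    (w : Fin N → ℝ) (hw : ∀ i, 0 < w i)
    (ρ γ : ℝ) (hρ0 : 0 < ρ) (hρ1 : ρ < 1) (hγ : 0 < γ)
    (h : wRNSP A k w ρ γ)
    (x : Fin N → V) (b : Fin m → V) (e : Fin m → V) (he : e = A x - b)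
    (lam : ℝ) (hlam0 : 0 < lam)
    (hlam : lam ≤ (1 + ρ) ^ 2 / ((3 + ρ) * γ) * (Real.sqrt k)⁻¹)
    (xt : Fin N → V) :
    l2norm (xt - x) ≤
      (1 + ρ) ^ 2 / (1 - ρ) / Real.sqrt k *
          (2 * sigmaK k w x + (Gobj A w lam xt b - Gobj A w lam x b) / lam) +
        ((1 + ρ) ^ 2 / (1 - ρ) / (Real.sqrt k * lam) + (3 + ρ) * γ / (1 - ρ)) *
          l2norm e := by
  have h1ρ : 0 < 1 - ρ := sub_pos.mpr hρ1
  have hdist := h.l2norm_sub_le_sigmaK hk (fun i => (hw i).le) hρ0.le hρ1 xt x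
  set r := l2norm (A xt - b)
  have hAv : l2norm (A (xt - x)) ≤ r + l2norm e := by
    rw [he, map_sub]
    convert l2norm_sub_le (A xt - b) (A x - b) using 2
    abel
  have hgap : (Gobj A w lam xt b - Gobj A w lam x b) / lam =
      l1wnorm w xt - l1wnorm w x + r / lam - l2norm e / lam := by
    rw [Gobj, Gobj, he]
    field_simp
    ring
  have hlam' : (3 + ρ) * γ / (1 - ρ) ≤ (1 + ρ) ^ 2 / (1 - ρ) / (√k * lam) := by
    rw [div_right_comm _ (1 - ρ), div_le_div_iff_of_pos_right h1ρ, le_div_iff₀ (by positivity)]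
    rw [← div_eq_mul_inv, div_div, le_div_iff₀ (by positivity)] at hlam
    linarith
  have hC1 : ∀ s, (1 + ρ) ^ 2 / (1 - ρ) / √k * (s / lam) =
      (1 + ρ) ^ 2 / (1 - ρ) / (√k * lam) * s := fun s => by
    field_simp
  rw [hgap]
  linarith [hC1 r, hC1 (l2norm e), mul_le_mul_of_nonneg_right hlam' (l2norm_nonneg (A xt - b)),
    mul_le_mul_of_nonneg_left hAv (by positivity : (0 : ℝ) ≤ (3 + ρ) * γ / (1 - ρ))]

/-- Weighted rNSP implies `ℓ²` error bounds for inexact minimizers of the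
weighted SR-LASSO. -/
theorem wRNSP_inexact_minimizer_bound {V : Type*} [NormedAddCommGroup V]
    [InnerProductSpace ℂ V] [CompleteSpace V] {N m : ℕ}
    (A : (Fin N → V) →L[ℂ] (Fin m → V)) (k : ℝ) (hk : 0 < k)
    (w : Fin N → ℝ) (hw : ∀ i, 0 < w i)
    (ρ γ : ℝ) (hρ0 : 0 < ρ) (hρ1 : ρ < 1) (hγ : 0 < γ)
    (h : wRNSP A k w ρ γ)
    (x : Fin N → V) (b : Fin m → V) (e : Fin m → V) (he : e = A x - b)
    (lam : ℝ) (hlam0 : 0 < lam)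
    (hlam : lam ≤ (1 + ρ) ^ 2 / ((3 + ρ) * γ) * (Real.sqrt k)⁻¹)
    (xt : Fin N → V) :
    l2norm (xt - x) ≤
      (1 + ρ) ^ 2 / (1 - ρ) / Real.sqrt k *
          (2 * sigmaK k w x + (Gobj A w lam xt b - Gobj A w lam x b) / lam) +
        ((1 + ρ) ^ 2 / (1 - ρ) / (Real.sqrt k * lam) + (3 + ρ) * γ / (1 - ρ)) *
          l2norm e :=
  wRNSP_inexact_minimizer_bound_general A k hk w hw ρ γ hρ0 hρ1 hγ h x b e he lam hlam0 hlam xt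
end

section
/- For n, d ∈ ℕ with n ≥ 2, the hyperbolic cross index set Λ_{n,d}^{HC} = { ν ∈ ℕ₀^d : ∏_{k=1}^d (ν_k + 1) ≤ n } satisfies |Λ_{n,d}^{HC}| ≤ e · n^{2 + log(d)/log(2)}. -/
/-!
Write `ν k + 1 = 2 ^ b k + r k` with `0 ≤ r k < 2 ^ b k`. The dyadic levels `b` of a point of the
hyperbolic cross satisfy `2 ^ ∑ b ≤ ∏ (ν k + 1) ≤ n`, so `∑ b ≤ L := ⌊log₂ n⌋`; there are at most
`∑_{s ≤ L} d ^ s ≤ (L + 1) d ^ L` such level vectors, and each of them is shared by at most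
`∏ 2 ^ b k = 2 ^ ∑ b ≤ n` points. Finally `L + 1 ≤ n` and `d ^ L ≤ n ^ (log d / log 2)`.
-/

open Finset

theorem Nat.multichoose_le_pow : ∀ n k : ℕ, Nat.multichoose n k ≤ n ^ k
  | n, 0 => by simp [Nat.multichoose_zero_right]
  | 0, k + 1 => by simp
  | n + 1, k + 1 => by
    have h₁ := Nat.multichoose_le_pow n (k + 1)
    have h₂ := Nat.multichoose_le_pow (n + 1) k
    have h₃ : n ^ (k + 1) ≤ n * (n + 1) ^ k := by
      rw [pow_succ']
      exact Nat.mul_le_mul_left n (Nat.pow_le_pow_left n.le_succ k)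
    rw [Nat.multichoose_succ_succ, pow_succ]
    nlinarith

def hyperbolicCross (ι : Type*) [Fintype ι] [DecidableEq ι] (n : ℕ) : Finset (ι → ℕ) :=
  {ν ∈ Fintype.piFinset fun _ => range n | ∏ k, (ν k + 1) ≤ n}

section

variable {ι : Type*} [Fintype ι]

theorem card_piAntidiag_univ [DecidableEq ι] (s : ℕ) :
    #(piAntidiag (univ : Finset ι) s) = Nat.multichoose (Fintype.card ι) s := by
  rw [← Sym.card_sym_eq_multichoose, ← Fintype.card_coe]
  exact Fintype.card_congr <| (Equiv.subtypeEquivRight fun f => by simp).trans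
    (Sym.equivNatSumOfFintype ι s).symm

theorem card_biUnion_piAntidiag_univ_le [DecidableEq ι] [Nonempty ι] (L : ℕ) :
    #((range (L + 1)).biUnion (piAntidiag (univ : Finset ι))) ≤
      (L + 1) * Fintype.card ι ^ L :=
  calc _ ≤ ∑ s ∈ range (L + 1), #(piAntidiag (univ : Finset ι) s) := card_biUnion_le
    _ ≤ ∑ _s ∈ range (L + 1), Fintype.card ι ^ L := by
      refine sum_le_sum fun s hs => ?_
      rw [card_piAntidiag_univ]
      exact (Nat.multichoose_le_pow _ s).trans
        (Nat.pow_le_pow_right Fintype.card_pos (Nat.lt_succ_iff.mp (mem_range.mp hs)))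
    _ = (L + 1) * Fintype.card ι ^ L := by simp

def dyadicLevel (ν : ι → ℕ) : ι → ℕ := fun k => Nat.log 2 (ν k + 1)

theorem two_pow_sum_dyadicLevel_le_prod (ν : ι → ℕ) :
    2 ^ ∑ k, dyadicLevel ν k ≤ ∏ k, (ν k + 1) := by
  rw [← prod_pow_eq_pow_sum]
  exact prod_le_prod' fun k _ => Nat.pow_log_le_self 2 (ν k).add_one_ne_zero

theorem card_filter_dyadicLevel_eq_le [DecidableEq ι] (s : Finset (ι → ℕ)) (b : ι → ℕ) :
    #{ν ∈ s | dyadicLevel ν = b} ≤ 2 ^ ∑ k, b k := by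
  have hsub : {ν ∈ s | dyadicLevel ν = b} ⊆
      Fintype.piFinset fun k => Ico (2 ^ b k - 1) (2 ^ (b k + 1) - 1) := by
    intro ν hν
    obtain rfl := (mem_filter.mp hν).2
    refine Fintype.mem_piFinset.mpr fun k => mem_Ico.mpr ?_
    have hlo := Nat.pow_log_le_self 2 (ν k).add_one_ne_zero
    have hhi := Nat.lt_pow_succ_log_self one_lt_two (ν k + 1)
    simp only [dyadicLevel, pow_succ] at hhi ⊢
    omega
  calc _ ≤ _ := card_le_card hsub
    _ = 2 ^ ∑ k, b k := by
      rw [Fintype.card_piFinset, ← prod_pow_eq_pow_sum]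
      refine prod_congr rfl fun k _ => ?_
      rw [Nat.card_Ico, pow_succ]
      have := Nat.one_le_two_pow (n := b k)
      omega

theorem coe_hyperbolicCross [DecidableEq ι] (n : ℕ) :
    (hyperbolicCross ι n : Set (ι → ℕ)) = {ν | ∏ k, (ν k + 1) ≤ n} := by
  ext ν
  simp only [hyperbolicCross, coe_filter, Fintype.mem_piFinset, mem_range, Set.mem_ofPred_eq,
    and_iff_right_iff_imp]
  intro h k
  exact Nat.lt_of_succ_le <|
    (single_le_prod' (fun j _ => Nat.le_add_left 1 (ν j)) (mem_univ k)).trans h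

theorem card_hyperbolicCross_le [DecidableEq ι] [Nonempty ι] {n : ℕ} (hn : n ≠ 0) :
    #(hyperbolicCross ι n) ≤ n * ((Nat.log 2 n + 1) * Fintype.card ι ^ Nat.log 2 n) := by
  set L := Nat.log 2 n
  have hmaps : ∀ ν ∈ hyperbolicCross ι n,
      dyadicLevel ν ∈ (range (L + 1)).biUnion (piAntidiag univ) := by
    intro ν hν
    have hsum : ∑ k, dyadicLevel ν k ≤ L := (Nat.le_log_iff_pow_le one_lt_two hn).mpr <|
      (two_pow_sum_dyadicLevel_le_prod ν).trans (mem_filter.mp hν).2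
    simpa [Nat.lt_succ_iff] using hsum
  refine (card_le_mul_card_image_of_maps_to hmaps n fun b hb => ?_).trans
    (Nat.mul_le_mul_left n (card_biUnion_piAntidiag_univ_le L))
  obtain ⟨s, hs, hb⟩ := mem_biUnion.mp hb
  have hbs : ∑ k, b k ≤ L := by
    simpa [(mem_piAntidiag.mp hb).1, Nat.lt_succ_iff] using hs
  calc _ ≤ 2 ^ ∑ k, b k := card_filter_dyadicLevel_eq_le _ b
    _ ≤ 2 ^ L := Nat.pow_le_pow_right two_pos hbs
    _ ≤ n := Nat.pow_log_le_self 2 hn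

end

theorem pow_natLog_le_rpow {d : ℕ} (hd : 1 ≤ d) (b n : ℕ) (hn : n ≠ 0) :
    (d : ℝ) ^ Nat.log b n ≤ (n : ℝ) ^ (Real.log d / Real.log b) := by
  have hd' : (1 : ℝ) ≤ d := by exact_mod_cast hd
  have hn' : (0 : ℝ) < n := by positivity
  calc (d : ℝ) ^ Nat.log b n = (d : ℝ) ^ (Nat.log b n : ℝ) := (Real.rpow_natCast _ _).symm
    _ ≤ (d : ℝ) ^ Real.logb b n := Real.rpow_le_rpow_of_exponent_le hd' (Real.natLog_le_logb n b)
    _ = (n : ℝ) ^ (Real.log d / Real.log b) := by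
      rw [Real.rpow_def_of_pos (by linarith), Real.rpow_def_of_pos hn', Real.logb]
      ring_nf

/-- Cardinality bound for the hyperbolic cross index set:
`|Λ^HC_{n,d}| ≤ e · n^{2 + log d / log 2}` for `n ≥ 2`. -/
theorem hyperbolic_cross_card_le' (d n : ℕ) (hd : 1 ≤ d) (hn : 2 ≤ n) :
    {ν : Fin d → ℕ | ∏ k, (ν k + 1) ≤ n}.Finite ∧
      ({ν : Fin d → ℕ | ∏ k, (ν k + 1) ≤ n}.ncard : ℝ) ≤
        Real.exp 1 * (n : ℝ) ^ ((2 : ℝ) + Real.log d / Real.log 2) := by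
  have : Nonempty (Fin d) := Fin.pos_iff_nonempty.mp hd
  have hn0 : n ≠ 0 := by omega
  have hn' : (0 : ℝ) < n := by positivity
  set L := Nat.log 2 n
  have hL : (L : ℝ) + 1 ≤ n := by exact_mod_cast Nat.log_lt_self 2 hn0
  rw [← coe_hyperbolicCross]
  refine ⟨finite_toSet _, ?_⟩
  rw [Set.ncard_coe_finset]
  calc (#(hyperbolicCross (Fin d) n) : ℝ) ≤ n * ((L + 1) * (d : ℝ) ^ L) := by
        exact_mod_cast Fintype.card_fin d ▸ card_hyperbolicCross_le hn0
    _ ≤ n * (n * (n : ℝ) ^ (Real.log d / Real.log 2)) := by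
        gcongr
        exact pow_natLog_le_rpow hd 2 n hn0
    _ = (n : ℝ) ^ ((2 : ℝ) + Real.log d / Real.log 2) := by
        rw [Real.rpow_add hn', Real.rpow_two]; ring
    _ ≤ Real.exp 1 * (n : ℝ) ^ ((2 : ℝ) + Real.log d / Real.log 2) :=
        le_mul_of_one_le_left (by positivity) (Real.one_le_exp zero_le_one)
end
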